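/- arXiv:1303.0799 — 8 statements merged into one kernel-verified Lean document; each statement's English description precedes it below -/
import Mathlib

section
/- For every θ ∈ (0,1) and all p, q ∈ [0,1], f(p,q) = 2·(2p−1)·(2q−1)·θ·(1−θ). In particular f(p,p) = 2·(2p−1)²·θ·(1−θ), which is strictly positive whenever p ≠ 1/2. -/
/-- Probability of observing H when evaluating with proficiency `p`, given prior `θ` on H. -/
noncomputable def obsH (θ p : ℝ) : ℝ := p * θ + (1 - p) * (1 - θ)

/-- The function `f_α(p,q)`. -/
noncomputable def fAlpha (θ α p q : ℝ) : ℝ :=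
  p * q + (1 - p) * (1 - q) -
    α * (obsH θ p * obsH θ q + (1 - obsH θ p) * (1 - obsH θ q))

/-- `f(p,q) := f_1(p,q)`. -/
noncomputable def fPQ (θ p q : ℝ) : ℝ := fAlpha θ 1 p q

/-- For every θ ∈ (0,1) and all p, q ∈ [0,1],
`f(p,q) = 2·(2p−1)·(2q−1)·θ·(1−θ)`; in particular `f(p,p) = 2·(2p−1)²·θ·(1−θ)`,
which is strictly positive whenever `p ≠ 1/2`. -/
theorem stmt0 (θ p q : ℝ) (hθ : θ ∈ Set.Ioo (0 : ℝ) 1)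
    (hp : p ∈ Set.Icc (0 : ℝ) 1) (hq : q ∈ Set.Icc (0 : ℝ) 1) :
    fPQ θ p q = 2 * (2 * p - 1) * (2 * q - 1) * θ * (1 - θ) ∧
    fPQ θ p p = 2 * (2 * p - 1) ^ 2 * θ * (1 - θ) ∧
    (p ≠ 1 / 2 → 0 < fPQ θ p p) := by
  have h1 : fPQ θ p q = 2 * (2 * p - 1) * (2 * q - 1) * θ * (1 - θ) := by
    simp only [fPQ, fAlpha, obsH]; ring
  have h2 : fPQ θ p p = 2 * (2 * p - 1) ^ 2 * θ * (1 - θ) := by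
    simp only [fPQ, fAlpha, obsH]; ring
  refine ⟨h1, h2, fun hne => ?_⟩
  rw [h2]
  have hne' : 2 * p - 1 ≠ 0 := by
    intro h; apply hne; linarith
  have hsq : (0:ℝ) < (2 * p - 1) ^ 2 := by positivity
  have := hθ.1; have := hθ.2
  have h1θ : (0:ℝ) < 1 - θ := by linarith
  positivity
end

section
/- Let θ ∈ (0,1) and α ≤ 1. If q ∈ (1/2,1], then the map p ↦ f_α(p,q) is strictly increasing on [0,1]; symmetrically, if p ∈ (1/2,1], then the map q ↦ f_α(p,q) is strictly increasing on [0,1]. (Lemma 1(i).) -/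
lemma fAlpha_key (θ α : ℝ) (hθ0 : 0 < θ) (hθ1 : θ < 1) (hα : α ≤ 1)
    (q : ℝ) (hq : 1 / 2 < q) (p1 p2 : ℝ) (h : p1 < p2) :
    fAlpha θ α p1 q < fAlpha θ α p2 q := by
  have hd : fAlpha θ α p2 q - fAlpha θ α p1 q
      = (p2 - p1) * (2 * q - 1) * (1 - α * (2 * θ - 1) ^ 2) := by
    simp only [fAlpha, obsH]; ring
  have hc : (2 * θ - 1) ^ 2 < 1 := by nlinarith
  have hpos : 0 < 1 - α * (2 * θ - 1) ^ 2 := by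
    rcases le_or_gt α 0 with h' | h'
    · nlinarith [sq_nonneg (2 * θ - 1)]
    · nlinarith
  nlinarith [mul_pos (mul_pos (sub_pos.2 h) (by linarith : (0:ℝ) < 2 * q - 1)) hpos]

lemma fAlpha_symm (θ α p q : ℝ) : fAlpha θ α p q = fAlpha θ α q p := by
  simp only [fAlpha, obsH]; ring

/-- Lemma 1(i): for θ ∈ (0,1) and α ≤ 1, if `q ∈ (1/2, 1]` then `p ↦ f_α(p,q)` is
strictly increasing on [0,1], and if `p ∈ (1/2, 1]` then `q ↦ f_α(p,q)` is
strictly increasing on [0,1]. -/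
theorem stmt1 (θ α : ℝ) (hθ : θ ∈ Set.Ioo (0 : ℝ) 1) (hα : α ≤ 1) :
    (∀ q ∈ Set.Ioc (1 / 2 : ℝ) 1,
      StrictMonoOn (fun p => fAlpha θ α p q) (Set.Icc (0 : ℝ) 1)) ∧
    (∀ p ∈ Set.Ioc (1 / 2 : ℝ) 1,
      StrictMonoOn (fun q => fAlpha θ α p q) (Set.Icc (0 : ℝ) 1)) := by
  constructor
  · intro q hq p1 _ p2 _ h
    exact fAlpha_key θ α hθ.1 hθ.2 hα q hq.1 p1 p2 h
  · intro p hp q1 _ q2 _ h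
    simp only [fAlpha_symm θ α p]
    exact fAlpha_key θ α hθ.1 hθ.2 hα p hp.1 q1 q2 h
end

section
/- Let θ ∈ (0,1) and α ≤ 1. If p, q ∈ [1/2,1] then f_α(p,q) ≥ 0, and if p, q ∈ (1/2,1] then f_α(p,q) > 0. (Lemma 1(ii).) -/
lemma key (θ α p q : ℝ) (hθ0 : 0 < θ) (hθ1 : θ < 1) (hα : α ≤ 1)
    (hp : 1/2 ≤ p) (hp1 : p ≤ 1) (hq : 1/2 ≤ q) (hq1 : q ≤ 1) :
    2 * (2*p - 1) * (2*q - 1) * (θ * (1 - θ)) ≤ fAlpha θ α p q := by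
  have hS : 0 ≤ obsH θ p * obsH θ q + (1 - obsH θ p) * (1 - obsH θ q) := by
    have h1 : 0 ≤ obsH θ p := by unfold obsH; nlinarith
    have h2 : 0 ≤ obsH θ q := by unfold obsH; nlinarith
    have h3 : obsH θ p ≤ 1 := by unfold obsH; nlinarith
    have h4 : obsH θ q ≤ 1 := by unfold obsH; nlinarith
    nlinarith
  have := mul_nonneg (sub_nonneg.mpr hα) hS
  unfold fAlpha obsH at *
  nlinarith [mul_nonneg (by linarith : (0:ℝ) ≤ 2*p-1) (by linarith : (0:ℝ) ≤ 2*q-1)]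

/-- Lemma 1(ii): for θ ∈ (0,1) and α ≤ 1, if `p, q ∈ [1/2, 1]` then `f_α(p,q) ≥ 0`,
and if `p, q ∈ (1/2, 1]` then `f_α(p,q) > 0`. -/
theorem stmt2 (θ α : ℝ) (hθ : θ ∈ Set.Ioo (0 : ℝ) 1) (hα : α ≤ 1) :
    (∀ p ∈ Set.Icc (1 / 2 : ℝ) 1, ∀ q ∈ Set.Icc (1 / 2 : ℝ) 1,
      0 ≤ fAlpha θ α p q) ∧
    (∀ p ∈ Set.Ioc (1 / 2 : ℝ) 1, ∀ q ∈ Set.Ioc (1 / 2 : ℝ) 1,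
      0 < fAlpha θ α p q) := by
  obtain ⟨hθ0, hθ1⟩ := hθ
  constructor
  · intro p hp q hq
    have := key θ α p q hθ0 hθ1 hα hp.1 hp.2 hq.1 hq.2
    nlinarith [mul_nonneg (by linarith [hp.1] : (0:ℝ) ≤ 2*p-1) (by linarith [hq.1] : (0:ℝ) ≤ 2*q-1), mul_pos hθ0 (by linarith : (0:ℝ) < 1-θ)]
  · intro p hp q hq
    have := key θ α p q hθ0 hθ1 hα hp.1.le hp.2 hq.1.le hq.2
    nlinarith [mul_pos (by linarith [hp.1] : (0:ℝ) < 2*p-1) (by linarith [hq.1] : (0:ℝ) < 2*q-1), mul_pos hθ0 (by linarith : (0:ℝ) < 1-θ)]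
end

section
/- For every θ ∈ (0,1) and all p, q ∈ [0,1]: p·(1−q) + (1−p)·q − (s(p)·(1−s(q)) + (1−s(p))·s(q)) = −f(p,q). In particular this quantity is ≤ 0 for p, q ∈ [1/2,1] and < 0 for p, q ∈ (1/2,1]. -/
lemma key_s4 (θ p q : ℝ) :
    p * (1 - q) + (1 - p) * q -
      (obsH θ p * (1 - obsH θ q) + (1 - obsH θ p) * obsH θ q)
      = -(2 * (2*p - 1) * (2*q - 1) * (θ * (1 - θ))) := by
  simp only [obsH]; ring

/-- For every θ ∈ (0,1) and all p, q ∈ [0,1]: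
`p(1−q) + (1−p)q − (s(p)(1−s(q)) + (1−s(p))s(q)) = −f(p,q)`,
and this quantity is ≤ 0 for p, q ∈ [1/2,1], and < 0 for p, q ∈ (1/2,1]. -/
theorem stmt4 (θ : ℝ) (hθ : θ ∈ Set.Ioo (0 : ℝ) 1) :
    (∀ p ∈ Set.Icc (0 : ℝ) 1, ∀ q ∈ Set.Icc (0 : ℝ) 1,
      p * (1 - q) + (1 - p) * q -
        (obsH θ p * (1 - obsH θ q) + (1 - obsH θ p) * obsH θ q) = -fPQ θ p q) ∧
    (∀ p ∈ Set.Icc (1 / 2 : ℝ) 1, ∀ q ∈ Set.Icc (1 / 2 : ℝ) 1,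
      p * (1 - q) + (1 - p) * q -
        (obsH θ p * (1 - obsH θ q) + (1 - obsH θ p) * obsH θ q) ≤ 0) ∧
    (∀ p ∈ Set.Ioc (1 / 2 : ℝ) 1, ∀ q ∈ Set.Ioc (1 / 2 : ℝ) 1,
      p * (1 - q) + (1 - p) * q -
        (obsH θ p * (1 - obsH θ q) + (1 - obsH θ p) * obsH θ q) < 0) := by
  obtain ⟨hθ0, hθ1⟩ := hθ
  refine ⟨?_, ?_, ?_⟩
  · intro p _ q _
    rw [key_s4]; simp only [fPQ, fAlpha, obsH]; ring
  · intro p hp q hq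
    rw [key_s4]
    have h1 : 0 ≤ 2*p - 1 := by linarith [hp.1]
    have h2 : 0 ≤ 2*q - 1 := by linarith [hq.1]
    nlinarith [mul_pos hθ0 (by linarith : (0:ℝ) < 1 - θ), mul_nonneg h1 h2]
  · intro p hp q hq
    rw [key_s4]
    have h1 : 0 < 2*p - 1 := by linarith [hp.1]
    have h2 : 0 < 2*q - 1 := by linarith [hq.1]
    nlinarith [mul_pos hθ0 (by linarith : (0:ℝ) < 1 - θ), mul_pos h1 h2]
end

section
/- Let θ ∈ (0,1), p̄ ∈ (1/2,1], and P ∈ (1/2,1]. Then for every q ∈ [1/2,P] and every α₁, α₂, α₃, α₄ ≥ 0 with α₁ + α₂ + α₃ + α₄ = 1: α₁·f(q,p̄) + α₂·f(1−q,p̄) ≤ f(P,p̄), with f(P,p̄) > 0, and equality holds if and only if q = P and α₁ = 1. (This is the per-task best-response content of Theorem 1: when reference raters exert full effort and report truthfully with expected proficiency p̄ > 1/2 and d_{ij} = d, full effort followed by truthful reporting strictly maximizes an agent's per-task expected reward in M_d.) -/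
lemma fPQ_eq (θ p q : ℝ) : fPQ θ p q = 2 * θ * (1 - θ) * (2 * p - 1) * (2 * q - 1) := by
  unfold fPQ fAlpha obsH; ring

/-- Per-task best-response content of Theorem 1: against truthful reference raters of
expected proficiency `p̄ > 1/2`, an agent of maximum proficiency `P > 1/2` using
evaluation proficiency `q ∈ [1/2, P]` and mixed reporting weights `(α₁,α₂,α₃,α₄)`
earns `α₁·f(q,p̄) + α₂·f(1−q,p̄) ≤ f(P,p̄)`, with `f(P,p̄) > 0`, and equality iff
`q = P` and `α₁ = 1`. -/
theorem stmt8 (θ pbar P : ℝ) (hθ : θ ∈ Set.Ioo (0 : ℝ) 1)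
    (hpbar : pbar ∈ Set.Ioc (1 / 2 : ℝ) 1) (hP : P ∈ Set.Ioc (1 / 2 : ℝ) 1)
    (q : ℝ) (hq : q ∈ Set.Icc (1 / 2 : ℝ) P)
    (a1 a2 a3 a4 : ℝ) (h1 : 0 ≤ a1) (h2 : 0 ≤ a2) (h3 : 0 ≤ a3) (h4 : 0 ≤ a4)
    (hsum : a1 + a2 + a3 + a4 = 1) :
    a1 * fPQ θ q pbar + a2 * fPQ θ (1 - q) pbar ≤ fPQ θ P pbar ∧
    0 < fPQ θ P pbar ∧
    (a1 * fPQ θ q pbar + a2 * fPQ θ (1 - q) pbar = fPQ θ P pbar ↔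
      q = P ∧ a1 = 1) := by
  obtain ⟨hθ0, hθ1⟩ := hθ
  obtain ⟨hpb, _⟩ := hpbar
  obtain ⟨hP1, _⟩ := hP
  obtain ⟨hq1, hq2⟩ := hq
  set K : ℝ := 2 * θ * (1 - θ) * (2 * pbar - 1) with hK
  have hKpos : 0 < K := by
    have : 0 < 1 - θ := by linarith
    have : 0 < 2 * pbar - 1 := by linarith
    positivity
  have e1 : fPQ θ q pbar = K * (2 * q - 1) := by rw [fPQ_eq]; ring
  have e2 : fPQ θ (1 - q) pbar = K * (1 - 2 * q) := by rw [fPQ_eq]; ring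
  have e3 : fPQ θ P pbar = K * (2 * P - 1) := by rw [fPQ_eq]; ring
  have ha1 : a1 ≤ 1 := by linarith
  have htq : (0:ℝ) ≤ 2 * q - 1 := by linarith
  have hqP : 2 * q - 1 ≤ 2 * P - 1 := by linarith
  have key : (a1 - a2) * (2 * q - 1) ≤ 2 * P - 1 := by nlinarith
  refine ⟨?_, ?_, ?_⟩
  · rw [e1, e2, e3]
    nlinarith [mul_le_mul_of_nonneg_left key (le_of_lt hKpos)]
  · rw [e3]; nlinarith
  · rw [e1, e2, e3]
    constructor
    · intro h
      have h' : (a1 - a2) * (2 * q - 1) = 2 * P - 1 := by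
        have : K * ((a1 - a2) * (2 * q - 1)) = K * (2 * P - 1) := by linarith [h]; 
        exact mul_left_cancel₀ (ne_of_gt hKpos) this
      have hqPeq : q = P := by nlinarith
      have ha : a1 = 1 := by nlinarith
      exact ⟨hqPeq, ha⟩
    · rintro ⟨rfl, rfl⟩
      have : a2 = 0 := by linarith
      rw [this]; ring
end

section
/- Let θ ∈ (0,1), p, p′ ∈ [0,1], and let α = (α₁,α₂,α₃,α₄) and α′ = (α′₁,α′₂,α′₃,α′₄) each be nonnegative with coordinates summing to 1. With h_H, h_L, h, Agree, Stat defined as in the context, the identity Agree − Stat = (α₁−α₂)·(α′₁−α′₂)·f(p,p′) holds. (This is the strategy-decomposition identity at the heart of Theorem 2.) -/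
/-- Probability of reporting H given the true type is H, for mixed strategy
`(α₁,α₂,α₃,α₄)` (truthful, invert, always-H, always-L) and proficiency `p`. -/
noncomputable def repH (a1 a2 a3 p : ℝ) : ℝ := a1 * p + a2 * (1 - p) + a3

/-- Probability of reporting H given the true type is L. -/
noncomputable def repL (a1 a2 a3 p : ℝ) : ℝ := a1 * (1 - p) + a2 * p + a3

/-- Unconditional probability of reporting H. -/
noncomputable def rep (θ a1 a2 a3 p : ℝ) : ℝ :=
  θ * repH a1 a2 a3 p + (1 - θ) * repL a1 a2 a3 p

/-- Strategy-decomposition identity at the heart of Theorem 2: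
`Agree − Stat = (α₁−α₂)(α′₁−α′₂)·f(p,p′)`. -/
theorem stmt10 (θ p p' : ℝ) (hθ : θ ∈ Set.Ioo (0 : ℝ) 1)
    (hp : p ∈ Set.Icc (0 : ℝ) 1) (hp' : p' ∈ Set.Icc (0 : ℝ) 1)
    (a1 a2 a3 a4 b1 b2 b3 b4 : ℝ)
    (ha1 : 0 ≤ a1) (ha2 : 0 ≤ a2) (ha3 : 0 ≤ a3) (ha4 : 0 ≤ a4)
    (hb1 : 0 ≤ b1) (hb2 : 0 ≤ b2) (hb3 : 0 ≤ b3) (hb4 : 0 ≤ b4)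
    (hsa : a1 + a2 + a3 + a4 = 1) (hsb : b1 + b2 + b3 + b4 = 1) :
    (θ * (repH a1 a2 a3 p * repH b1 b2 b3 p' +
            (1 - repH a1 a2 a3 p) * (1 - repH b1 b2 b3 p')) +
      (1 - θ) * (repL a1 a2 a3 p * repL b1 b2 b3 p' +
            (1 - repL a1 a2 a3 p) * (1 - repL b1 b2 b3 p'))) -
      (rep θ a1 a2 a3 p * rep θ b1 b2 b3 p' +
        (1 - rep θ a1 a2 a3 p) * (1 - rep θ b1 b2 b3 p')) =
    (a1 - a2) * (b1 - b2) * fPQ θ p p' := by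
  unfold rep repH repL fPQ fAlpha obsH; ring
end

section
/- Let θ ∈ (0,1) and P, P′ ∈ [1/2,1]. For all p ∈ [1/2,P], p′ ∈ [1/2,P′], and all α = (α₁,α₂,α₃,α₄), α′ = (α′₁,α′₂,α′₃,α′₄) nonnegative with coordinates summing to 1: (α₁−α₂)·(α′₁−α′₂)·f(p,p′) ≤ f(P,P′), with equality when p = P, p′ = P′, α₁ = α′₁ = 1. (This is the maximization content of Theorem 2: full effort and truthful reporting by both agents yields the maximum per-task expected reward over all strategy profiles, including mixed strategies.) -/
/-- Maximization content of Theorem 2: for maximum proficiencies `P, P′ ∈ [1/2,1]`,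
all attainable `p ∈ [1/2,P]`, `p′ ∈ [1/2,P′]`, and all mixed-strategy simplex weights,
`(α₁−α₂)(α′₁−α′₂)·f(p,p′) ≤ f(P,P′)`, with equality when `p = P`, `p′ = P′`,
`α₁ = α′₁ = 1`. -/
theorem stmt11 (θ P P' : ℝ) (hθ : θ ∈ Set.Ioo (0 : ℝ) 1)
    (hP : P ∈ Set.Icc (1 / 2 : ℝ) 1) (hP' : P' ∈ Set.Icc (1 / 2 : ℝ) 1) :
    (∀ p ∈ Set.Icc (1 / 2 : ℝ) P, ∀ p' ∈ Set.Icc (1 / 2 : ℝ) P',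
      ∀ a1 a2 a3 a4 b1 b2 b3 b4 : ℝ,
        0 ≤ a1 → 0 ≤ a2 → 0 ≤ a3 → 0 ≤ a4 →
        0 ≤ b1 → 0 ≤ b2 → 0 ≤ b3 → 0 ≤ b4 →
        a1 + a2 + a3 + a4 = 1 → b1 + b2 + b3 + b4 = 1 →
        (a1 - a2) * (b1 - b2) * fPQ θ p p' ≤ fPQ θ P P') ∧
    ((1 - 0) * (1 - 0) * fPQ θ P P' = fPQ θ P P') := by
  obtain ⟨hθ0, hθ1⟩ := hθ
  constructor
  · intro p hp p' hp' a1 a2 a3 a4 b1 b2 b3 b4 ha1 ha2 ha3 ha4 hb1 hb2 hb3 hb4 hsa hsb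
    obtain ⟨hp1, hp2⟩ := hp
    obtain ⟨hp'1, hp'2⟩ := hp'
    rw [fPQ_eq, fPQ_eq]
    have hK : 0 < 2 * θ * (1 - θ) := by nlinarith
    have hA1 : a1 - a2 ≤ 1 := by linarith
    have hA2 : -1 ≤ a1 - a2 := by linarith
    have hB1 : b1 - b2 ≤ 1 := by linarith
    have hB2 : -1 ≤ b1 - b2 := by linarith
    have hx : 0 ≤ 2 * p - 1 := by linarith
    have hy : 0 ≤ 2 * p' - 1 := by linarith
    have hxy : (2 * p - 1) * (2 * p' - 1) ≤ (2 * P - 1) * (2 * P' - 1) := by nlinarith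
    have hAB : (a1 - a2) * (b1 - b2) ≤ 1 := by nlinarith
    have hab : (a1 - a2) * (b1 - b2) * ((2 * p - 1) * (2 * p' - 1)) ≤
        (2 * P - 1) * (2 * P' - 1) := by
      calc (a1 - a2) * (b1 - b2) * ((2 * p - 1) * (2 * p' - 1))
          ≤ 1 * ((2 * p - 1) * (2 * p' - 1)) :=
            mul_le_mul_of_nonneg_right hAB (mul_nonneg hx hy)
        _ ≤ (2 * P - 1) * (2 * P' - 1) := by linarith
    nlinarith [mul_le_mul_of_nonneg_left hab hK.le]
  · ring
end

section
/- Let D, T, m, n be positive integers with T ≥ 2, D dividing m, m ≥ D², and n·D = m·T (so n/T = m/D is an integer). Then there exists an assignment J : Fin n → Finset (Fin m) of tasks to agents such that: (i) |J(i)| = D for every agent i; (ii) for every task j, the number of agents i with j ∈ J(i) is exactly T; and (iii) for every agent i and every task j ∈ J(i), there exists an agent i′ ≠ i with j ∈ J(i′) and J(i′) ∩ J(i) = {j}. (This is the feasibility lemma for the task-assignment algorithm of Section 5: every agent-task pair admits a reference rater who shares exactly that one task with the agent.) -/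
/-- Cancellation: adding `a` mod `k` is injective on `[0,k)`. -/
lemma stmt14_cancel {k a x y : ℕ} (hx : x < k) (hy : y < k)
    (h : (a + x) % k = (a + y) % k) : x = y := by
  have h' : x % k = y % k := Nat.ModEq.add_left_cancel' a h
  rwa [Nat.mod_eq_of_lt hx, Nat.mod_eq_of_lt hy] at h'

/-- A "block" selecting one element of each row of a `C × K` grid has `C` elements. -/
lemma stmt14_block_card {M C K : ℕ} (hM : M = C * K) (hK : 0 < K)
    (f : ℕ → ℕ) (hf : ∀ r, f r < K) :
    (Finset.univ.filter (fun j : Fin M => (j : ℕ) % K = f ((j : ℕ) / K))).card = C := by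
  subst hM
  have hmem : ∀ r ∈ Finset.range C, r * K + f r < C * K := by
    intro r hr
    have hr' : r + 1 ≤ C := Finset.mem_range.mp hr
    calc r * K + f r < r * K + K := by have := hf r; omega
      _ = (r + 1) * K := by ring
      _ ≤ C * K := Nat.mul_le_mul_right K hr'
  have hdiv : ∀ r, (r * K + f r) / K = r := by
    intro r
    rw [add_comm, Nat.add_mul_div_right _ _ hK, Nat.div_eq_of_lt (hf r), zero_add]
  have hmod : ∀ r, (r * K + f r) % K = f r := by
    intro r
    rw [add_comm, Nat.add_mul_mod_self_right, Nat.mod_eq_of_lt (hf r)]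
  have key : (Finset.univ.filter
      (fun j : Fin (C * K) => (j : ℕ) % K = f ((j : ℕ) / K))).card = (Finset.range C).card := by
    refine Finset.card_bij' (fun j _ => (j : ℕ) / K)
        (fun r hr => (⟨r * K + f r, hmem r hr⟩ : Fin (C * K))) ?_ ?_ ?_ ?_
    · intro j hj
      have hj2 : (j : ℕ) < K * C := by
        have h3 := j.isLt
        have h4 : K * C = C * K := Nat.mul_comm _ _
        omega
      exact Finset.mem_range.mpr (Nat.div_lt_of_lt_mul hj2)
    · intro r hr
      simp only [Finset.mem_filter, Finset.mem_univ, true_and]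
      simp [hdiv r, hmod r]
    · intro j hj
      simp only [Finset.mem_filter, Finset.mem_univ, true_and] at hj
      apply Fin.ext
      simp only []
      rw [← hj]
      have h1 := Nat.div_add_mod (j : ℕ) K
      have h2 : ((j : ℕ) / K) * K = K * ((j : ℕ) / K) := Nat.mul_comm _ _
      omega
    · intro r hr
      exact hdiv r

  simpa using key
/-- Feasibility lemma for the task-assignment algorithm of Section 5: with `n` agents,
`m` tasks, `D` tasks per agent, `T ≥ 2` agents per task, `D ∣ m`, `m ≥ D²`, and
`n·D = m·T`, there is an assignment in which every agent gets exactly `D` tasks, every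
task gets exactly `T` agents, and every agent-task pair admits a reference rater who
shares exactly that one task with the agent. -/
theorem stmt14 (D T m n : ℕ) (hD : 0 < D) (hT : 2 ≤ T) (hm : 0 < m) (hn : 0 < n)
    (hdvd : D ∣ m) (hsq : D ^ 2 ≤ m) (hbal : n * D = m * T) :
    ∃ J : Fin n → Finset (Fin m),
      (∀ i, (J i).card = D) ∧
      (∀ j : Fin m, (Finset.univ.filter (fun i => j ∈ J i)).card = T) ∧
      (∀ i, ∀ j ∈ J i, ∃ i', i' ≠ i ∧ j ∈ J i' ∧ J i' ∩ J i = {j}) := by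
  obtain ⟨k, hk⟩ := hdvd
  have hkpos : 0 < k := by
    rcases Nat.eq_zero_or_pos k with h | h
    · rw [h, mul_zero] at hk; omega
    · exact h
  have hDk : D ≤ k := by
    have : D * D ≤ D * k := by rw [← hk]; nlinarith [hsq]
    exact Nat.le_of_mul_le_mul_left this hD
  have hnkT : n = k * T := by
    have : n * D = (k * T) * D := by rw [hbal, hk]; ring
    exact Nat.eq_of_mul_eq_mul_right hD this
  have hdivD : ∀ j : Fin m, (j : ℕ) / k < D := by
    intro j
    apply Nat.div_lt_of_lt_mul
    have h1 := j.isLt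
    have h2 : k * D = D * k := Nat.mul_comm _ _
    omega
  -- key fact: for fixed residue `c < k` and shift `r`, the unique `b < k` with
  -- `(b + r) % k = c` is `a' c r`.
  set A : ℕ → ℕ → ℕ := fun c r => (c + (k - r % k)) % k with hA
  have hAlt : ∀ c r, A c r < k := fun c r => Nat.mod_lt _ hkpos
  have hAkey : ∀ c r, c < k → (A c r + r) % k = c := by
    intro c r hc
    have h1 : (A c r + r) % k = (c + (k - r % k) + r) % k := by
      rw [hA]; exact Nat.mod_add_mod _ _ _
    have hrk : r % k < k := Nat.mod_lt _ hkpos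
    have hdm := Nat.div_add_mod r k
    have hdist : k * (1 + r / k) = k + k * (r / k) := by ring
    have h2 : c + (k - r % k) + r = c + k * (1 + r / k) := by omega
    rw [h1, h2, Nat.add_mul_mod_self_left, Nat.mod_eq_of_lt hc]
  have hAuniq : ∀ c r b, c < k → b < k → ((b + r) % k = c ↔ b = A c r) := by
    intro c r b hc hb
    constructor
    · intro hbr
      have h1 : (r + b) % k = (r + A c r) % k := by
        rw [add_comm r b, add_comm r (A c r), hbr, hAkey c r hc]
      exact stmt14_cancel hb (hAlt c r) h1
    · intro h; subst h; exact hAkey c r hc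
  -- the assignment
  refine ⟨fun i => Finset.univ.filter
      (fun j => (j : ℕ) % k =
        if (i : ℕ) < k then (i : ℕ) % k else ((i : ℕ) % k + (j : ℕ) / k) % k),
    ?_, ?_, ?_⟩
  · -- each agent gets D tasks
    intro i
    by_cases hik : (i : ℕ) < k
    · have : ∀ j : Fin m, ((j : ℕ) % k =
          if (i : ℕ) < k then (i : ℕ) % k else ((i : ℕ) % k + (j : ℕ) / k) % k) ↔
          ((j : ℕ) % k = (fun _ : ℕ => (i : ℕ) % k) ((j : ℕ) / k)) := by
        intro j; simp [hik]
      simp only []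
      rw [Finset.filter_congr (fun j _ => by exact this j)]
      exact stmt14_block_card hk hkpos _ (fun r => Nat.mod_lt _ hkpos)
    · have : ∀ j : Fin m, ((j : ℕ) % k =
          if (i : ℕ) < k then (i : ℕ) % k else ((i : ℕ) % k + (j : ℕ) / k) % k) ↔
          ((j : ℕ) % k = (fun r : ℕ => ((i : ℕ) % k + r) % k) ((j : ℕ) / k)) := by
        intro j; simp [hik]
      simp only []
      rw [Finset.filter_congr (fun j _ => by exact this j)]
      exact stmt14_block_card hk hkpos _ (fun r => Nat.mod_lt _ hkpos)
  · -- each task gets T agents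
    intro j
    set c := (j : ℕ) % k with hc
    set r := (j : ℕ) / k with hr
    have hck : c < k := Nat.mod_lt _ hkpos
    have heq : ∀ i : Fin n,
        (j ∈ Finset.univ.filter (fun j' : Fin m => (j' : ℕ) % k =
          if (i : ℕ) < k then (i : ℕ) % k else ((i : ℕ) % k + (j' : ℕ) / k) % k)) ↔
        ((i : ℕ) % k = (fun t : ℕ => if t = 0 then c else A c r) ((i : ℕ) / k)) := by
      intro i
      simp only [Finset.mem_filter, Finset.mem_univ, true_and, ← hc, ← hr]
      by_cases hik : (i : ℕ) < k
      · have : (i : ℕ) / k = 0 := Nat.div_eq_of_lt hik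
        simp [hik, this, eq_comm]
      · have : (i : ℕ) / k ≠ 0 := by
          rw [Ne, Nat.div_eq_zero_iff]
          omega
        simp only [hik, if_neg this, if_false]
        rw [eq_comm]
        exact hAuniq c r _ hck (Nat.mod_lt _ hkpos)
    simp only []
    rw [Finset.filter_congr (fun i _ => heq i)]
    exact stmt14_block_card (hnkT.trans (mul_comm k T)) hkpos
      (fun t => if t = 0 then c else A c r)
      (fun t => by by_cases ht : t = 0 <;> simp only [ht, if_true, if_false] <;>
        [exact hck; exact hAlt c r])
  · -- reference raters
    intro i j hj
    simp only [Finset.mem_filter, Finset.mem_univ, true_and] at hj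
    set c := (j : ℕ) % k with hc
    set r := (j : ℕ) / k with hr
    have hck : c < k := Nat.mod_lt _ hkpos
    have hrD : r < D := hdivD j
    have hn2k : k + k ≤ n := by
      rw [hnkT]; nlinarith
    by_cases hik : (i : ℕ) < k
    · -- i is a "column" agent; reference rater is a "diagonal" agent
      rw [if_pos hik] at hj
      refine ⟨⟨k + A c r, by have := hAlt c r; omega⟩, ?_, ?_, ?_⟩
      · intro h
        have := congrArg (fun x : Fin n => (x : ℕ)) h
        simp at this
        omega
      · simp only [Finset.mem_filter, Finset.mem_univ, true_and]
        have h1 : ¬ (k + A c r < k) := by omega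
        rw [if_neg h1]
        have h2 : (k + A c r) % k = A c r := by
          rw [Nat.add_mod_left, Nat.mod_eq_of_lt (hAlt c r)]
        rw [h2, ← hr, ← hc]
        exact (hAkey c r hck).symm
      · ext j''
        simp only [Finset.mem_inter, Finset.mem_filter, Finset.mem_univ, true_and,
          Finset.mem_singleton]
        have h1 : ¬ (k + A c r < k) := by omega
        have h2 : (k + A c r) % k = A c r := by
          rw [Nat.add_mod_left, Nat.mod_eq_of_lt (hAlt c r)]
        rw [if_neg h1, if_pos hik, h2]
        constructor
        · rintro ⟨hm1, hm2⟩
          have hr'' : (j'' : ℕ) / k < D := hdivD j''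
          have hc'' : (j'' : ℕ) % k = c := by rw [hm2, ← hj, hc]
          have : (A c r + (j'' : ℕ) / k) % k = (A c r + r) % k := by
            rw [← hm1, hc'', hAkey c r hck]
          have hdiveq : (j'' : ℕ) / k = r := stmt14_cancel (by omega) (by omega) this
          apply Fin.ext
          have e1 := Nat.div_add_mod (j'' : ℕ) k
          have e2 := Nat.div_add_mod (j : ℕ) k
          rw [← hc, ← hr] at e2
          rw [hdiveq, hc''] at e1
          omega
        · rintro rfl
          refine ⟨?_, hj⟩
          rw [← hc, ← hr]
          exact (hAkey c r hck).symm
    · -- i is a "diagonal" agent; reference rater is a "column" agent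
      rw [if_neg hik] at hj
      refine ⟨⟨c, by omega⟩, ?_, ?_, ?_⟩
      · intro h
        have := congrArg (fun x : Fin n => (x : ℕ)) h
        simp at this
        omega
      · simp only [Finset.mem_filter, Finset.mem_univ, true_and]
        rw [if_pos (show (c : ℕ) < k from hck), Nat.mod_eq_of_lt hck, ← hc]
      · ext j''
        simp only [Finset.mem_inter, Finset.mem_filter, Finset.mem_univ, true_and,
          Finset.mem_singleton]
        rw [if_pos (show (c : ℕ) < k from hck), if_neg hik, Nat.mod_eq_of_lt hck]
        constructor
        · rintro ⟨hm1, hm2⟩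
          have hr'' : (j'' : ℕ) / k < D := hdivD j''
          have : ((i : ℕ) % k + (j'' : ℕ) / k) % k = ((i : ℕ) % k + r) % k := by
            rw [← hm2, hm1]; exact hj
          have hdiveq : (j'' : ℕ) / k = r := stmt14_cancel (by omega) (by omega) this
          apply Fin.ext
          have e1 := Nat.div_add_mod (j'' : ℕ) k
          have e2 := Nat.div_add_mod (j : ℕ) k
          rw [← hc, ← hr] at e2
          rw [hdiveq, hm1] at e1
          omega
        · rintro rfl
          exact ⟨hc.symm, hj⟩
end
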